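/- arXiv:math/9907072 — 6 statements merged into one kernel-verified Lean document; each statement's English description precedes it below -/
import Mathlib

section
/- For any finite family of subsets S_1, S_2, …, S_m of N = {1,…,n}, the intersection of the subgroups P_{S_1}, P_{S_2}, …, P_{S_m} of P_n equals P_{S_1 ∩ S_2 ∩ … ∩ S_m}. -/
/-!
Common setup: the pure braid group `P_n` as a presented group, the subgroups
`P_S` and `Q_S`, the characterization of the homomorphisms `φ_S`, the support
`σ(x)`, and monic commutators.
-/

/-- The free-group generator corresponding to the pure braid generator
`p_{a,b}` for `a < b` (indices in `Fin n`, so strand `i+1` of `{1,…,n}`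
corresponds to `i : Fin n`). -/
def pf {n : ℕ} (a b : Fin n) (h : a < b) :
    FreeGroup {q : Fin n × Fin n // q.1 < q.2} :=
  FreeGroup.of ⟨(a, b), h⟩

/-- The defining relations (A), (B), (C) of the pure braid group `P_n`,
each written in the form `lhs⁻¹ * rhs` for an equation `lhs = rhs`. -/
def braidRels (n : ℕ) : Set (FreeGroup {q : Fin n × Fin n // q.1 < q.2}) :=
  -- (A) first equality: p_{a,b} p_{a,c} p_{b,c} = p_{a,c} p_{b,c} p_{a,b}
  {r | ∃ (a b c : Fin n) (hab : a < b) (hbc : b < c),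
      r = (pf a b hab * pf a c (hab.trans hbc) * pf b c hbc)⁻¹ *
          (pf a c (hab.trans hbc) * pf b c hbc * pf a b hab)} ∪
  -- (A) second equality: p_{a,b} p_{a,c} p_{b,c} = p_{b,c} p_{a,b} p_{a,c}
  {r | ∃ (a b c : Fin n) (hab : a < b) (hbc : b < c),
      r = (pf a b hab * pf a c (hab.trans hbc) * pf b c hbc)⁻¹ *
          (pf b c hbc * pf a b hab * pf a c (hab.trans hbc))} ∪
  -- (B) first: p_{a,b} p_{c,d} = p_{c,d} p_{a,b}
  {r | ∃ (a b c d : Fin n) (hab : a < b) (hbc : b < c) (hcd : c < d),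
      r = (pf a b hab * pf c d hcd)⁻¹ * (pf c d hcd * pf a b hab)} ∪
  -- (B) second: p_{a,d} p_{b,c} = p_{b,c} p_{a,d}
  {r | ∃ (a b c d : Fin n) (hab : a < b) (hbc : b < c) (hcd : c < d),
      r = (pf a d (hab.trans (hbc.trans hcd)) * pf b c hbc)⁻¹ *
          (pf b c hbc * pf a d (hab.trans (hbc.trans hcd)))} ∪
  -- (C): p_{a,c} (p_{b,c}⁻¹ p_{b,d} p_{b,c}) = (p_{b,c}⁻¹ p_{b,d} p_{b,c}) p_{a,c}
  {r | ∃ (a b c d : Fin n) (hab : a < b) (hbc : b < c) (hcd : c < d),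
      r = (pf a c (hab.trans hbc) * ((pf b c hbc)⁻¹ * pf b d (hbc.trans hcd) * pf b c hbc))⁻¹ *
          ((pf b c hbc)⁻¹ * pf b d (hbc.trans hcd) * pf b c hbc * pf a c (hab.trans hbc))}

/-- The pure braid group `P_n`, given by the presentation above. -/
abbrev PB (n : ℕ) := PresentedGroup (braidRels n)

/-- The generator `p_{a,b}` of the pure braid group, for `a < b`. -/
def p {n : ℕ} (a b : Fin n) (h : a < b) : PB n := PresentedGroup.of ⟨(a, b), h⟩

/-- `P_S`: the subgroup of `P_n` generated by all `p_{a,b}` with `a ∈ S` and `b ∈ S`. -/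
def PS {n : ℕ} (S : Set (Fin n)) : Subgroup (PB n) :=
  Subgroup.closure {x | ∃ (a b : Fin n) (h : a < b), a ∈ S ∧ b ∈ S ∧ x = p a b h}

/-- `Q_S`: the subgroup of `P_n` generated by all `p_{a,b}` with `a ∈ S` or `b ∈ S`. -/
def QS {n : ℕ} (S : Set (Fin n)) : Subgroup (PB n) :=
  Subgroup.closure {x | ∃ (a b : Fin n) (h : a < b), (a ∈ S ∨ b ∈ S) ∧ x = p a b h}

/-- `IsPhi S φ` says that `φ : P_n → P_n` is the homomorphism `φ_S`, i.e. it sends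
`p_{a,b}` to itself if `a ∉ S` and `b ∉ S`, and to `1` otherwise. -/
def IsPhi {n : ℕ} (S : Set (Fin n)) (φ : PB n →* PB n) : Prop :=
  ∀ (a b : Fin n) (h : a < b),
    (a ∉ S ∧ b ∉ S → φ (p a b h) = p a b h) ∧ ((a ∈ S ∨ b ∈ S) → φ (p a b h) = 1)

/-- The support `σ(x)` of `x ∈ P_n`: the intersection of all `S` with `x ∈ P_S`. -/
def support {n : ℕ} (x : PB n) : Set (Fin n) := ⋂₀ {S | x ∈ PS S}

/-- Monic commutators: the smallest set of elements of `P_n` containing all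
`p_{a,b}` and `p_{a,b}⁻¹` and closed under taking nontrivial commutators
`[x,y] = x⁻¹ y⁻¹ x y`. -/
inductive IsMonic {n : ℕ} : PB n → Prop
  | of (a b : Fin n) (h : a < b) : IsMonic (p a b h)
  | inv (a b : Fin n) (h : a < b) : IsMonic (p a b h)⁻¹
  | comm (x y : PB n) : IsMonic x → IsMonic y → x⁻¹ * y⁻¹ * x * y ≠ 1 →
      IsMonic (x⁻¹ * y⁻¹ * x * y)

/-! ### Auxiliary development -/

section Aux

variable {n : ℕ}

lemma braid_eq {r : FreeGroup {q : Fin n × Fin n // q.1 < q.2}} (hr : r ∈ braidRels n) :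
    PresentedGroup.mk (braidRels n) r = 1 :=
  (QuotientGroup.eq_one_iff r).mpr (Subgroup.subset_normalClosure hr)

lemma relA1 (a b c : Fin n) (hab : a < b) (hbc : b < c) :
    p a b hab * p a c (hab.trans hbc) * p b c hbc =
    p a c (hab.trans hbc) * p b c hbc * p a b hab := by
  have hr : ((pf a b hab * pf a c (hab.trans hbc) * pf b c hbc)⁻¹ *
      (pf a c (hab.trans hbc) * pf b c hbc * pf a b hab)) ∈ braidRels n :=
    Or.inl (Or.inl (Or.inl (Or.inl ⟨a, b, c, hab, hbc, rfl⟩)))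
  have h := braid_eq hr
  simp only [map_mul, map_inv, inv_mul_eq_one] at h
  exact h

lemma relA2 (a b c : Fin n) (hab : a < b) (hbc : b < c) :
    p a b hab * p a c (hab.trans hbc) * p b c hbc =
    p b c hbc * p a b hab * p a c (hab.trans hbc) := by
  have hr : ((pf a b hab * pf a c (hab.trans hbc) * pf b c hbc)⁻¹ *
      (pf b c hbc * pf a b hab * pf a c (hab.trans hbc))) ∈ braidRels n :=
    Or.inl (Or.inl (Or.inl (Or.inr ⟨a, b, c, hab, hbc, rfl⟩)))
  have h := braid_eq hr
  simp only [map_mul, map_inv, inv_mul_eq_one] at h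
  exact h

lemma relB1 (a b c d : Fin n) (hab : a < b) (hbc : b < c) (hcd : c < d) :
    p a b hab * p c d hcd = p c d hcd * p a b hab := by
  have hr : ((pf a b hab * pf c d hcd)⁻¹ * (pf c d hcd * pf a b hab)) ∈ braidRels n :=
    Or.inl (Or.inl (Or.inr ⟨a, b, c, d, hab, hbc, hcd, rfl⟩))
  have h := braid_eq hr
  simp only [map_mul, map_inv, inv_mul_eq_one] at h
  exact h

lemma relB2 (a b c d : Fin n) (hab : a < b) (hbc : b < c) (hcd : c < d) :
    p a d (hab.trans (hbc.trans hcd)) * p b c hbc =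
    p b c hbc * p a d (hab.trans (hbc.trans hcd)) := by
  have hr : ((pf a d (hab.trans (hbc.trans hcd)) * pf b c hbc)⁻¹ *
      (pf b c hbc * pf a d (hab.trans (hbc.trans hcd)))) ∈ braidRels n :=
    Or.inl (Or.inr ⟨a, b, c, d, hab, hbc, hcd, rfl⟩)
  have h := braid_eq hr
  simp only [map_mul, map_inv, inv_mul_eq_one] at h
  exact h

lemma relC (a b c d : Fin n) (hab : a < b) (hbc : b < c) (hcd : c < d) :
    p a c (hab.trans hbc) * ((p b c hbc)⁻¹ * p b d (hbc.trans hcd) * p b c hbc) =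
    (p b c hbc)⁻¹ * p b d (hbc.trans hcd) * p b c hbc * p a c (hab.trans hbc) := by
  have hr : ((pf a c (hab.trans hbc) *
        ((pf b c hbc)⁻¹ * pf b d (hbc.trans hcd) * pf b c hbc))⁻¹ *
      ((pf b c hbc)⁻¹ * pf b d (hbc.trans hcd) * pf b c hbc * pf a c (hab.trans hbc))) ∈
      braidRels n :=
    Or.inr ⟨a, b, c, d, hab, hbc, hcd, rfl⟩
  have h := braid_eq hr
  simp only [map_mul, map_inv, inv_mul_eq_one] at h
  exact h

open Classical in
/-- The function on generators inducing `φ_T`. -/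
noncomputable def phiFun (T : Set (Fin n)) (q : {q : Fin n × Fin n // q.1 < q.2}) : PB n :=
  if q.1.1 ∈ T ∧ q.1.2 ∈ T then p q.1.1 q.1.2 q.2 else 1

lemma phi_rels (T : Set (Fin n)) :
    ∀ r ∈ braidRels n, FreeGroup.lift (phiFun T) r = 1 := by
  rintro r ((((⟨a, b, c, hab, hbc, rfl⟩ | ⟨a, b, c, hab, hbc, rfl⟩) |
      ⟨a, b, c, d, hab, hbc, hcd, rfl⟩) | ⟨a, b, c, d, hab, hbc, hcd, rfl⟩) |
      ⟨a, b, c, d, hab, hbc, hcd, rfl⟩) <;>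
    simp only [map_mul, map_inv, pf, FreeGroup.lift_apply_of, phiFun, inv_mul_eq_one]
  · by_cases ha : a ∈ T <;> by_cases hb : b ∈ T <;> by_cases hc : c ∈ T <;>
      simp [ha, hb, hc] <;>
      first
        | exact relA1 a b c hab hbc
        | group
  · by_cases ha : a ∈ T <;> by_cases hb : b ∈ T <;> by_cases hc : c ∈ T <;>
      simp [ha, hb, hc] <;>
      first
        | exact relA2 a b c hab hbc
        | group
  · by_cases ha : a ∈ T <;> by_cases hb : b ∈ T <;> by_cases hc : c ∈ T <;>
      by_cases hd : d ∈ T <;> simp [ha, hb, hc, hd] <;>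
      first
        | exact relB1 a b c d hab hbc hcd
        | group
  · by_cases ha : a ∈ T <;> by_cases hb : b ∈ T <;> by_cases hc : c ∈ T <;>
      by_cases hd : d ∈ T <;> simp [ha, hb, hc, hd] <;>
      first
        | exact relB2 a b c d hab hbc hcd
        | group
  · by_cases ha : a ∈ T <;> by_cases hb : b ∈ T <;> by_cases hc : c ∈ T <;>
      by_cases hd : d ∈ T <;> simp [ha, hb, hc, hd] <;>
      first
        | exact relC a b c d hab hbc hcd
        | group

/-- The retraction `φ_T : P_n → P_n`. -/
noncomputable def phi (T : Set (Fin n)) : PB n →* PB n :=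
  PresentedGroup.toGroup (phi_rels T)

lemma phi_p_mem {T : Set (Fin n)} {a b : Fin n} (h : a < b) (ha : a ∈ T) (hb : b ∈ T) :
    phi T (p a b h) = p a b h := by
  have h0 := PresentedGroup.toGroup.of (phi_rels T) (x := ⟨(a, b), h⟩)
  simp only [phiFun] at h0
  rw [if_pos ⟨ha, hb⟩] at h0
  exact h0

lemma phi_p_not {T : Set (Fin n)} {a b : Fin n} (h : a < b) (hab : a ∉ T ∨ b ∉ T) :
    phi T (p a b h) = 1 := by
  have h0 := PresentedGroup.toGroup.of (phi_rels T) (x := ⟨(a, b), h⟩)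
  simp only [phiFun] at h0
  rw [if_neg (by tauto)] at h0
  exact h0

lemma phi_mem_PS (T : Set (Fin n)) (x : PB n) : phi T x ∈ PS T := by
  refine PresentedGroup.generated_by _ ((PS T).comap (phi T)) (fun j => ?_) x
  obtain ⟨⟨a, b⟩, h⟩ := j
  show phi T (p a b h) ∈ PS T
  by_cases ha : a ∈ T
  · by_cases hb : b ∈ T
    · rw [phi_p_mem h ha hb]
      exact Subgroup.subset_closure ⟨a, b, h, ha, hb, rfl⟩
    · rw [phi_p_not h (Or.inr hb)]; exact one_mem _
  · rw [phi_p_not h (Or.inl ha)]; exact one_mem _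

lemma mem_PS_iff (T : Set (Fin n)) (x : PB n) : x ∈ PS T ↔ phi T x = x := by
  constructor
  · intro hx
    induction hx using Subgroup.closure_induction with
    | mem y hy =>
      obtain ⟨a, b, h, ha, hb, rfl⟩ := hy
      exact phi_p_mem h ha hb
    | one => exact map_one _
    | mul y z _ _ ihy ihz => rw [map_mul, ihy, ihz]
    | inv y _ ihy => rw [map_inv, ihy]
  · intro hx
    rw [← hx]
    exact phi_mem_PS T x

lemma phi_phi (A B : Set (Fin n)) (x : PB n) : phi A (phi B x) = phi (A ∩ B) x := by
  refine PresentedGroup.generated_by _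
    (MonoidHom.eqLocus ((phi A).comp (phi B)) (phi (A ∩ B))) (fun j => ?_) x
  obtain ⟨⟨a, b⟩, h⟩ := j
  show phi A (phi B (p a b h)) = phi (A ∩ B) (p a b h)
  by_cases hB : a ∈ B ∧ b ∈ B
  · rw [phi_p_mem h hB.1 hB.2]
    by_cases hA : a ∈ A ∧ b ∈ A
    · rw [phi_p_mem h hA.1 hA.2, phi_p_mem h (Set.mem_inter hA.1 hB.1) (Set.mem_inter hA.2 hB.2)]
    · rcases not_and_or.mp hA with hx | hx
      · rw [phi_p_not h (Or.inl hx), phi_p_not h (Or.inl (fun hm => hx hm.1))]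
      · rw [phi_p_not h (Or.inr hx), phi_p_not h (Or.inr (fun hm => hx hm.1))]
  · rcases not_and_or.mp hB with hx | hx
    · rw [phi_p_not h (Or.inl hx), map_one, phi_p_not h (Or.inl (fun hm => hx hm.2))]
    · rw [phi_p_not h (Or.inr hx), map_one, phi_p_not h (Or.inr (fun hm => hx hm.2))]

lemma PS_univ : PS (Set.univ : Set (Fin n)) = ⊤ := by
  rw [eq_top_iff]
  intro x _
  refine PresentedGroup.generated_by _ (PS Set.univ) (fun j => ?_) x
  obtain ⟨⟨a, b⟩, h⟩ := j
  exact Subgroup.subset_closure ⟨a, b, h, trivial, trivial, rfl⟩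

lemma PS_mono {A B : Set (Fin n)} (hAB : A ⊆ B) : PS A ≤ PS B :=
  Subgroup.closure_mono (fun _x ⟨a, b, hlt, ha, hb, hx⟩ => ⟨a, b, hlt, hAB ha, hAB hb, hx⟩)

lemma mem_PS_iInter : ∀ (m : ℕ) (S : Fin m → Set (Fin n)) (x : PB n),
    (∀ i, x ∈ PS (S i)) → x ∈ PS (⋂ i, S i) := by
  intro m
  induction m with
  | zero =>
    intro S x _
    rw [Set.iInter_of_empty, PS_univ]
    trivial
  | succ k ih =>
    intro S x hx
    have h1 : x ∈ PS (S 0) := hx 0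
    have h2 : x ∈ PS (⋂ i : Fin k, S i.succ) := ih _ x (fun i => hx i.succ)
    have hfix : phi (S 0 ∩ ⋂ i : Fin k, S i.succ) x = x := by
      rw [← phi_phi, (mem_PS_iff _ x).mp h2, (mem_PS_iff _ x).mp h1]
    have hset : (⋂ i : Fin (k + 1), S i) = S 0 ∩ ⋂ i : Fin k, S i.succ := by
      ext y
      simp [Set.mem_iInter, Fin.forall_fin_succ]
    rw [hset]
    exact (mem_PS_iff _ x).mpr hfix

end Aux

/-- the intersection of the subgroups `P_{S_1}, …, P_{S_m}`
equals `P_{S_1 ∩ ⋯ ∩ S_m}`. -/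
theorem inf_PS (n m : ℕ) (hn : 0 < n) (S : Fin m → Set (Fin n)) :
    (⨅ i, PS (S i)) = PS (⋂ i, S i) := by
  apply le_antisymm
  · intro x hx
    exact mem_PS_iInter m S x (fun i => Subgroup.mem_iInf.mp hx i)
  · exact le_iInf fun i => PS_mono (Set.iInter_subset S i)
end

section
/- In the pure braid group P_3, the subgroup Q_{{2}} ∩ Q_{{3}} has infinite index in the subgroup Q_{{2}}. -/
/-- Auxiliary: exponent-count of the generator `p_{0,1}` into `Multiplicative ℤ`. -/
def toZcnt : {q : Fin 3 × Fin 3 // q.1 < q.2} → Multiplicative ℤ :=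
  fun q => if q.1 = ((0 : Fin 3), (1 : Fin 3)) then Multiplicative.ofAdd 1 else 1

lemma rels_toZ : ∀ r ∈ braidRels 3, FreeGroup.lift toZcnt r = 1 := by
  rintro r ((((⟨a,b,c,hab,hbc,rfl⟩|⟨a,b,c,hab,hbc,rfl⟩)|⟨a,b,c,d,hab,hbc,hcd,rfl⟩)|
      ⟨a,b,c,d,hab,hbc,hcd,rfl⟩)|⟨a,b,c,d,hab,hbc,hcd,rfl⟩) <;>
    simp only [pf, map_mul, map_inv, FreeGroup.lift_apply_of] <;>
    rw [inv_mul_eq_one] <;> ac_rfl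

/-- The counting homomorphism on `PB 3`. -/
def fZ : PB 3 →* Multiplicative ℤ := PresentedGroup.toGroup rels_toZ

lemma fZ_p (a b : Fin 3) (h : a < b) :
    fZ (p a b h) = if (a, b) = ((0 : Fin 3), (1 : Fin 3)) then Multiplicative.ofAdd 1 else 1 :=
  PresentedGroup.toGroup.of rels_toZ

lemma QS2_le_ker : QS ({2} : Set (Fin 3)) ≤ fZ.ker := by
  rw [QS, Subgroup.closure_le]
  rintro x ⟨a, b, h, hmem, rfl⟩
  have hne : (a, b) ≠ ((0 : Fin 3), (1 : Fin 3)) := by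
    rcases hmem with h2 | h2 <;> simp only [Set.mem_singleton_iff] at h2 <;> subst h2
    · exact fun he => absurd h (by rw [Prod.mk.injEq] at he; omega)
    · exact fun he => by rw [Prod.mk.injEq] at he; exact absurd he.2 (by decide)
  simp [MonoidHom.mem_ker, fZ_p, hne]

lemma hp01 : p (0 : Fin 3) 1 (by decide) ∈ QS ({1} : Set (Fin 3)) :=
  Subgroup.subset_closure ⟨0, 1, by decide, Or.inr rfl, rfl⟩

/-- in `P_3`, the subgroup `Q_{{2}} ∩ Q_{{3}}` has infinite index
in `Q_{{2}}`.  (Strand `i` of `{1,2,3}` corresponds to `i - 1 : Fin 3`, so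
`Q_{{2}} = QS {1}` and `Q_{{3}} = QS {2}`.) -/
theorem infinite_index :
    (((QS ({1} : Set (Fin 3))) ⊓ (QS ({2} : Set (Fin 3)))).subgroupOf
      (QS ({1} : Set (Fin 3)))).index = 0 := by
  have h01 : (0 : Fin 3) < 1 := by decide
  set H := QS ({1} : Set (Fin 3))
  set K := ((QS ({1} : Set (Fin 3))) ⊓ (QS ({2} : Set (Fin 3)))).subgroupOf H with hK
  have hpow : ∀ k : ℤ, (p (0 : Fin 3) 1 h01) ^ k ∈ H := fun k => zpow_mem hp01 k
  have hinj : Function.Injective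
      (fun k : ℤ => (QuotientGroup.mk ⟨(p (0 : Fin 3) 1 h01) ^ k, hpow k⟩ : H ⧸ K)) := by
    intro j k hjk
    simp only [QuotientGroup.eq] at hjk
    rw [hK, Subgroup.mem_subgroupOf] at hjk
    have := QS2_le_ker hjk.2
    rw [MonoidHom.mem_ker] at this
    simp only [Subgroup.coe_mul, InvMemClass.coe_inv, map_mul, map_inv, map_zpow, fZ_p] at this
    simp only [if_true] at this
    rw [← ofAdd_zsmul, ← ofAdd_zsmul, ← ofAdd_neg, ← ofAdd_add, ofAdd_eq_one, smul_eq_mul, smul_eq_mul] at this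
    omega
  have : Infinite (H ⧸ K) := Infinite.of_injective _ hinj
  exact Nat.card_eq_zero_of_infinite
end

section
/- In the pure braid group P_3, the subgroup Q_{{2}} ∩ Q_{{3}} is not finitely generated. -/
/-!
Write `a = p₁₂`, `b = p₁₃`, `c = p₂₃`. The full twist `abc` commutes with `b` and `c`, so
conjugation by `a` agrees on `c` with conjugation by `(bc)⁻¹`; hence every `yₖ = aᵏ c a⁻ᵏ` lies in
`Q_{{2}} ∩ Q_{{3}}`. Conversely `Q_{{3}} = ⟨b, c⟩` lies in the kernel of the exponent sum of `a`,
whose kernel on `Q_{{2}} = ⟨a, c⟩` is generated by the `yₖ`. So a finitely generated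
`Q_{{2}} ∩ Q_{{3}}` would lie in `⟨yⱼ | j ∈ F⟩` for a finite `F`. This fails for `yₖ`, `k ∉ F`:
in the action of `P_3` on `ℤ` in which `a` shifts by `2` and `c` swaps `0` and `1`, `yₖ` acts as
the transposition `(2k 2k+1)`, while the `yⱼ` with `j ≠ k` fix `2k`.
-/

open Subgroup

section GroupLemmas

variable {G : Type*} [Group G]

theorem Subgroup.exists_finset_mem_closure_image {ι : Type*} {f : ι → G} {x : G}
    (hx : x ∈ closure (Set.range f)) : ∃ F : Finset ι, x ∈ closure (f '' F) := by
  classical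
  induction hx using closure_induction with
  | mem x hx =>
    obtain ⟨i, rfl⟩ := hx
    exact ⟨{i}, subset_closure ⟨i, by simp⟩⟩
  | one => exact ⟨∅, one_mem _⟩
  | mul x y _ _ hx hy =>
    obtain ⟨F, hF⟩ := hx
    obtain ⟨F', hF'⟩ := hy
    have mono : ∀ s ⊆ F ∪ F', closure (f '' s) ≤ closure (f '' ↑(F ∪ F')) := fun s hs =>
      closure_mono (Set.image_mono (Finset.coe_subset.2 hs))
    exact ⟨F ∪ F', mul_mem (mono F Finset.subset_union_left hF)
      (mono F' Finset.subset_union_right hF')⟩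
  | inv x _ hx =>
    obtain ⟨F, hF⟩ := hx
    exact ⟨F, inv_mem hF⟩

theorem Subgroup.FG.exists_finset_le_closure_image {ι : Type*} {f : ι → G} {H : Subgroup G}
    (hH : H.FG) (hle : H ≤ closure (Set.range f)) : ∃ F : Finset ι, H ≤ closure (f '' F) := by
  classical
  obtain ⟨T, rfl⟩ := hH
  choose F hF using fun t : T => exists_finset_mem_closure_image (hle (subset_closure t.2))
  refine ⟨Finset.univ.biUnion F, closure_le _ |>.2 fun t ht => ?_⟩
  refine closure_mono (Set.image_mono ?_) (hF ⟨t, ht⟩)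
  exact Finset.coe_subset.2 (Finset.subset_biUnion_of_mem F (Finset.mem_univ _))

theorem conj_zpow_mul_of_commute {w d s : G} (hwd : Commute w d) (hsd : Commute s d) (k : ℤ) :
    (w * d) ^ k * s * (w * d) ^ (-k) = w ^ k * s * w ^ (-k) := by
  have hs : d ^ k * s * (d ^ k)⁻¹ = s := by rw [← (hsd.zpow_right k).eq, mul_inv_cancel_right]
  calc (w * d) ^ k * s * (w * d) ^ (-k) = w ^ k * (d ^ k * s * (d ^ k)⁻¹) * (w ^ k)⁻¹ := by
        rw [zpow_neg, hwd.mul_zpow]; group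
    _ = w ^ k * s * w ^ (-k) := by rw [hs, zpow_neg]

theorem closure_pair_inf_ker_le_closure_conj (E : G →* Multiplicative ℤ) {a s : G}
    (ha : E a = Multiplicative.ofAdd 1) (hs : E s = 1) :
    closure {a, s} ⊓ E.ker ≤ closure (Set.range fun k : ℤ => a ^ k * s * a ^ (-k)) := by
  set K := closure (Set.range fun k : ℤ => a ^ k * s * a ^ (-k))
  have hconj : ∀ (j : ℤ), ∀ x ∈ K, a ^ j * x * a ^ (-j) ∈ K := by
    intro j x hx
    have : K.map (MulAut.conj (a ^ j)).toMonoidHom ≤ K := by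
      rw [MonoidHom.map_closure, closure_le]
      rintro _ ⟨_, ⟨k, rfl⟩, rfl⟩
      refine subset_closure ⟨j + k, ?_⟩
      simp only [MulEquiv.coe_toMonoidHom, MulAut.conj_apply]
      group
    exact this ⟨x, hx, by simp only [MulEquiv.coe_toMonoidHom, MulAut.conj_apply, zpow_neg]⟩
  have key : ∀ h ∈ closure {a, s}, a ^ (-(E h).toAdd) * h ∈ K := by
    intro h hh
    induction hh using closure_induction with
    | mem x hx =>
      rcases hx with rfl | hx
      · simp [ha]
      · rw [hx]
        have : s ∈ K := subset_closure ⟨0, by simp⟩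
        simpa [hs] using this
    | one => simp
    | mul x y _ _ hx hy =>
      have := mul_mem (hconj (-(E y).toAdd) _ hx) hy
      rw [map_mul, toAdd_mul]
      convert this using 1
      rw [neg_add, zpow_add, neg_neg]
      group
    | inv x _ hx =>
      have := hconj (E x).toAdd _ (inv_mem hx)
      rw [map_inv, toAdd_inv, neg_neg]
      convert this using 1
      group
  rintro h ⟨hh, hker⟩
  simpa [MonoidHom.mem_ker.1 hker] using key h hh

end GroupLemmas

namespace PB3

def p₁₂ : PB 3 := p 0 1 (by decide)

def p₁₃ : PB 3 := p 0 2 (by decide)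

def p₂₃ : PB 3 := p 1 2 (by decide)

theorem mk_eq_one_of_mem_braidRels {r : FreeGroup {q : Fin 3 × Fin 3 // q.1 < q.2}}
    (hr : r ∈ braidRels 3) : PresentedGroup.mk (braidRels 3) r = 1 :=
  (QuotientGroup.eq_one_iff r).2 (subset_normalClosure hr)

theorem p₁₂_mul_p₁₃_mul_p₂₃_eq_left : p₁₂ * p₁₃ * p₂₃ = p₁₃ * p₂₃ * p₁₂ :=
  inv_mul_eq_one.1 <| mk_eq_one_of_mem_braidRels <|
    Or.inl <| Or.inl <| Or.inl <| Or.inl ⟨0, 1, 2, by decide, by decide, rfl⟩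

theorem p₁₂_mul_p₁₃_mul_p₂₃_eq_right : p₁₂ * p₁₃ * p₂₃ = p₂₃ * p₁₂ * p₁₃ :=
  inv_mul_eq_one.1 <| mk_eq_one_of_mem_braidRels <|
    Or.inl <| Or.inl <| Or.inl <| Or.inr ⟨0, 1, 2, by decide, by decide, rfl⟩

section Lift

variable {G : Type*} [Group G] (A B C : G)

def generatorImage (q : {q : Fin 3 × Fin 3 // q.1 < q.2}) : G :=
  if q.1 = (0, 1) then A else if q.1 = (0, 2) then B else C

variable {A B C}

-- Relations (B) and (C) need four strands, so in `P_3` only the two relations (A) remain.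
theorem lift_generatorImage_braidRels (h₁ : A * B * C = B * C * A) (h₂ : A * B * C = C * A * B) :
    ∀ r ∈ braidRels 3, FreeGroup.lift (generatorImage A B C) r = 1 := by
  rintro r ((((⟨a, b, c, hab, hbc, rfl⟩ | ⟨a, b, c, hab, hbc, rfl⟩) |
      ⟨a, b, c, d, hab, hbc, hcd, rfl⟩) | ⟨a, b, c, d, hab, hbc, hcd, rfl⟩) |
      ⟨a, b, c, d, hab, hbc, hcd, rfl⟩)
  · obtain ⟨rfl, rfl, rfl⟩ : a = 0 ∧ b = 1 ∧ c = 2 := by omega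
    rw [map_mul, map_inv, inv_mul_eq_one]
    simpa [pf, generatorImage] using h₁
  · obtain ⟨rfl, rfl, rfl⟩ : a = 0 ∧ b = 1 ∧ c = 2 := by omega
    rw [map_mul, map_inv, inv_mul_eq_one]
    simpa [pf, generatorImage] using h₂
  all_goals omega

def lift (h₁ : A * B * C = B * C * A) (h₂ : A * B * C = C * A * B) : PB 3 →* G :=
  PresentedGroup.toGroup (lift_generatorImage_braidRels h₁ h₂)

variable (h₁ : A * B * C = B * C * A) (h₂ : A * B * C = C * A * B)

@[simp]
theorem lift_p₁₂ : lift h₁ h₂ p₁₂ = A := PresentedGroup.toGroup.of _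

@[simp]
theorem lift_p₁₃ : lift h₁ h₂ p₁₃ = B := PresentedGroup.toGroup.of _

@[simp]
theorem lift_p₂₃ : lift h₁ h₂ p₂₃ = C := PresentedGroup.toGroup.of _

end Lift

theorem QS_one_eq : QS ({1} : Set (Fin 3)) = closure {p₁₂, p₂₃} := by
  rw [QS]
  congr 1
  ext x
  simp only [Set.mem_ofPred_eq, Set.mem_insert_iff, Set.mem_singleton_iff]
  constructor
  · rintro ⟨a, b, h, hab, rfl⟩
    obtain ⟨rfl, rfl⟩ | ⟨rfl, rfl⟩ : (a = 0 ∧ b = 1) ∨ (a = 1 ∧ b = 2) := by omega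
    exacts [Or.inl rfl, Or.inr rfl]
  · rintro (rfl | rfl)
    exacts [⟨0, 1, by decide, by decide, rfl⟩, ⟨1, 2, by decide, by decide, rfl⟩]

theorem QS_two_eq : QS ({2} : Set (Fin 3)) = closure {p₁₃, p₂₃} := by
  rw [QS]
  congr 1
  ext x
  simp only [Set.mem_ofPred_eq, Set.mem_insert_iff, Set.mem_singleton_iff]
  constructor
  · rintro ⟨a, b, h, hab, rfl⟩
    obtain ⟨rfl, rfl⟩ | ⟨rfl, rfl⟩ : (a = 0 ∧ b = 2) ∨ (a = 1 ∧ b = 2) := by omega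
    exacts [Or.inl rfl, Or.inr rfl]
  · rintro (rfl | rfl)
    exacts [⟨0, 2, by decide, by decide, rfl⟩, ⟨1, 2, by decide, by decide, rfl⟩]

def fullTwist : PB 3 := p₁₂ * p₁₃ * p₂₃

theorem commute_p₁₃_fullTwist : Commute p₁₃ fullTwist := by
  calc p₁₃ * fullTwist = p₁₃ * (p₂₃ * p₁₂ * p₁₃) := by rw [fullTwist, p₁₂_mul_p₁₃_mul_p₂₃_eq_right]
    _ = p₁₃ * p₂₃ * p₁₂ * p₁₃ := by group
    _ = fullTwist * p₁₃ := by rw [fullTwist, p₁₂_mul_p₁₃_mul_p₂₃_eq_left]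

theorem commute_p₂₃_fullTwist : Commute p₂₃ fullTwist := by
  calc p₂₃ * fullTwist = p₂₃ * p₁₂ * p₁₃ * p₂₃ := by rw [fullTwist]; group
    _ = fullTwist * p₂₃ := by rw [fullTwist, p₁₂_mul_p₁₃_mul_p₂₃_eq_right]

theorem p₁₂_eq : p₁₂ = (p₂₃⁻¹ * p₁₃⁻¹) * fullTwist := by
  rw [fullTwist, p₁₂_mul_p₁₃_mul_p₂₃_eq_left]
  group

def conjP₂₃ (k : ℤ) : PB 3 := p₁₂ ^ k * p₂₃ * p₁₂ ^ (-k)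

theorem conjP₂₃_mem_QS_one (k : ℤ) : conjP₂₃ k ∈ QS ({1} : Set (Fin 3)) := by
  rw [QS_one_eq]
  have h₁₂ : p₁₂ ∈ closure {p₁₂, p₂₃} := subset_closure (by simp)
  exact mul_mem (mul_mem (zpow_mem h₁₂ k) (subset_closure (by simp))) (zpow_mem h₁₂ (-k))

theorem conjP₂₃_mem_QS_two (k : ℤ) : conjP₂₃ k ∈ QS ({2} : Set (Fin 3)) := by
  have hw : Commute (p₂₃⁻¹ * p₁₃⁻¹) fullTwist :=
    commute_p₂₃_fullTwist.inv_left.mul_left commute_p₁₃_fullTwist.inv_left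
  rw [conjP₂₃, p₁₂_eq, conj_zpow_mul_of_commute hw commute_p₂₃_fullTwist, QS_two_eq]
  have hw_mem : p₂₃⁻¹ * p₁₃⁻¹ ∈ closure {p₁₃, p₂₃} :=
    mul_mem (inv_mem (subset_closure (by simp))) (inv_mem (subset_closure (by simp)))
  exact mul_mem (mul_mem (zpow_mem hw_mem k) (subset_closure (by simp))) (zpow_mem hw_mem (-k))

theorem conjP₂₃_mem_inf (k : ℤ) :
    conjP₂₃ k ∈ QS ({1} : Set (Fin 3)) ⊓ QS ({2} : Set (Fin 3)) :=
  ⟨conjP₂₃_mem_QS_one k, conjP₂₃_mem_QS_two k⟩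

def exponentSumP₁₂ : PB 3 →* Multiplicative ℤ :=
  lift (A := Multiplicative.ofAdd 1) (B := 1) (C := 1) (by simp) (by simp)

theorem QS_two_le_ker_exponentSumP₁₂ : QS ({2} : Set (Fin 3)) ≤ exponentSumP₁₂.ker := by
  rw [QS_two_eq, closure_le]
  rintro _ (rfl | rfl) <;> simp [exponentSumP₁₂]

theorem inf_le_closure_range_conjP₂₃ :
    QS ({1} : Set (Fin 3)) ⊓ QS ({2} : Set (Fin 3)) ≤ closure (Set.range conjP₂₃) :=
  calc QS ({1} : Set (Fin 3)) ⊓ QS ({2} : Set (Fin 3))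
      ≤ closure {p₁₂, p₂₃} ⊓ exponentSumP₁₂.ker :=
        inf_le_inf QS_one_eq.le QS_two_le_ker_exponentSumP₁₂
    _ ≤ closure (Set.range conjP₂₃) :=
        closure_pair_inf_ker_le_closure_conj _ (lift_p₁₂ _ _) (lift_p₂₃ _ _)

def swapRep : PB 3 →* Equiv.Perm ℤ :=
  lift (A := Equiv.addRight (2 : ℤ)) (B := (Equiv.addRight 2)⁻¹ * (Equiv.swap 0 1)⁻¹)
    (C := Equiv.swap 0 1) (by group) (by group)

theorem swapRep_conjP₂₃ (k : ℤ) : swapRep (conjP₂₃ k) = Equiv.swap (2 * k) (2 * k + 1) := by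
  rw [conjP₂₃, map_mul, map_mul, map_zpow, map_zpow, swapRep, lift_p₁₂, lift_p₂₃, zpow_neg,
    ← Equiv.swap_apply_apply]
  simp [mul_comm, add_comm]

theorem conjP₂₃_notMem_closure_image {F : Set ℤ} {k : ℤ} (hk : k ∉ F) :
    conjP₂₃ k ∉ closure (conjP₂₃ '' F) := by
  intro hmem
  have hle :
      closure (conjP₂₃ '' F) ≤ (MulAction.stabilizer (Equiv.Perm ℤ) (2 * k)).comap swapRep := by
    rw [closure_le]
    rintro _ ⟨j, hj, rfl⟩
    have hjk : j ≠ k := fun h => hk (h ▸ hj)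
    simp only [SetLike.mem_coe, mem_comap, MulAction.mem_stabilizer_iff, swapRep_conjP₂₃,
      Equiv.Perm.smul_def]
    exact Equiv.swap_apply_of_ne_of_ne (by omega) (by omega)
  have := hle hmem
  simp [MulAction.mem_stabilizer_iff, swapRep_conjP₂₃] at this

end PB3

/-- in `P_3`, the subgroup `Q_{{2}} ∩ Q_{{3}}` is not finitely
generated.  (Strand `i` of `{1,2,3}` corresponds to `i - 1 : Fin 3`, so
`Q_{{2}} = QS {1}` and `Q_{{3}} = QS {2}`.) -/
theorem not_fg :
    ¬ ((QS ({1} : Set (Fin 3))) ⊓ (QS ({2} : Set (Fin 3)))).FG := by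
  intro hfg
  obtain ⟨F, hF⟩ := hfg.exists_finset_le_closure_image PB3.inf_le_closure_range_conjP₂₃
  obtain ⟨k, hk⟩ := F.exists_notMem
  exact PB3.conjP₂₃_notMem_closure_image hk (hF (PB3.conjP₂₃_mem_inf k))
end

section
/- For every element x of the pure braid group P_n, x belongs to P_{σ(x)}, where σ(x) is the intersection of all subsets S of N = {1,…,n} such that x ∈ P_S. Consequently, σ(x) is the smallest subset S of N with x ∈ P_S. -/
/-!
`P_S ∩ P_T = P_{S ∩ T}`, because the homomorphism `P_n → P_n` that keeps the generators
`p_{a,b}` with `a, b ∈ T` and kills all others is well defined, fixes `P_T` pointwise and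
maps `P_S` into `P_{S ∩ T}`. As `N` is finite, the sets `S` with `x ∈ P_S` then form a
finite family closed under intersection and containing `N`, so their intersection `σ(x)`
belongs to it.
-/

namespace PB

variable {n : ℕ}

open Classical in
noncomputable def retractionGen (T : Set (Fin n)) : {q : Fin n × Fin n // q.1 < q.2} → PB n :=
  fun g => if g.1.1 ∈ T ∧ g.1.2 ∈ T then PresentedGroup.of g else 1

/- When all strands of a relation lie in `T` its image is the relation itself, read in `P_n`;
otherwise the surviving generators satisfy it already in the free group. -/
theorem lift_retractionGen_eq_one (T : Set (Fin n)) :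
    ∀ r ∈ braidRels n, FreeGroup.lift (retractionGen T) r = 1 := by
  intro r hr
  have hr_one : PresentedGroup.mk (braidRels n) r = 1 := PresentedGroup.one_of_mem hr
  rcases hr with ((((⟨a, b, c, hab, hbc, rfl⟩ | ⟨a, b, c, hab, hbc, rfl⟩) |
    ⟨a, b, c, d, hab, hbc, hcd, rfl⟩) | ⟨a, b, c, d, hab, hbc, hcd, rfl⟩) |
    ⟨a, b, c, d, hab, hbc, hcd, rfl⟩) <;>
  simp only [map_mul, map_inv, pf, FreeGroup.lift_apply_of, retractionGen] at hr_one ⊢ <;>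
  split_ifs <;> (simp_all [PresentedGroup.of]; try group)

noncomputable def retraction (T : Set (Fin n)) : PB n →* PB n :=
  PresentedGroup.toGroup (lift_retractionGen_eq_one T)

open Classical in
theorem retraction_p (T : Set (Fin n)) (a b : Fin n) (h : a < b) :
    retraction T (p a b h) = if a ∈ T ∧ b ∈ T then p a b h else 1 :=
  PresentedGroup.toGroup.of _

theorem retraction_eq_self_of_mem_PS {T : Set (Fin n)} {x : PB n} (hx : x ∈ PS T) :
    retraction T x = x := by
  have hle : PS T ≤ (retraction T).eqLocus (MonoidHom.id _) := by
    rw [PS, Subgroup.closure_le]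
    rintro _ ⟨a, b, h, ha, hb, rfl⟩
    show retraction T (p a b h) = p a b h
    rw [retraction_p, if_pos ⟨ha, hb⟩]
  exact hle hx

theorem map_retraction_PS_le (S T : Set (Fin n)) :
    (PS S).map (retraction T) ≤ PS (S ∩ T) := by
  rw [PS, MonoidHom.map_closure, Subgroup.closure_le]
  rintro _ ⟨_, ⟨a, b, h, ha, hb, rfl⟩, rfl⟩
  rw [retraction_p]
  split_ifs with hT
  · exact Subgroup.subset_closure ⟨a, b, h, ⟨ha, hT.1⟩, ⟨hb, hT.2⟩, rfl⟩
  · exact one_mem _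

theorem PS_mono {S T : Set (Fin n)} (hST : S ⊆ T) : PS S ≤ PS T :=
  Subgroup.closure_mono fun _ ⟨a, b, h, ha, hb, hx⟩ => ⟨a, b, h, hST ha, hST hb, hx⟩

theorem PS_inter (S T : Set (Fin n)) : PS (S ∩ T) = PS S ⊓ PS T := by
  refine le_antisymm (le_inf (PS_mono Set.inter_subset_left) (PS_mono Set.inter_subset_right))
    fun x ⟨hS, hT⟩ => ?_
  rw [← retraction_eq_self_of_mem_PS hT]
  exact map_retraction_PS_le S T ⟨x, hS, rfl⟩

theorem PS_univ : PS (Set.univ : Set (Fin n)) = ⊤ := by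
  rw [eq_top_iff, ← PresentedGroup.closure_range_of, PS]
  refine Subgroup.closure_mono ?_
  rintro _ ⟨⟨⟨a, b⟩, h⟩, rfl⟩
  exact ⟨a, b, h, trivial, trivial, rfl⟩

theorem infClosed_setOf_mem_PS (x : PB n) : InfClosed {S : Set (Fin n) | x ∈ PS S} :=
  fun S hS T hT => (PS_inter S T).ge ⟨hS, hT⟩

end PB

theorem mem_PS_support_general (n : ℕ) (x : PB n) :
    x ∈ PS (support x) ∧ ∀ S : Set (Fin n), x ∈ PS S → support x ⊆ S :=
  ⟨(PB.infClosed_setOf_mem_PS x).sInf_mem (Set.toFinite _) (by simp [PB.PS_univ]) subset_rfl,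
    fun _ hS => Set.sInter_subset_of_mem hS⟩

/-- every `x ∈ P_n` belongs to `P_{σ(x)}`; consequently `σ(x)` is
the smallest subset `S` of `N` with `x ∈ P_S`. -/
theorem mem_PS_support (n : ℕ) (hn : 0 < n) (x : PB n) :
    x ∈ PS (support x) ∧ ∀ S : Set (Fin n), x ∈ PS S → support x ⊆ S :=
  mem_PS_support_general n x
end

section
/- If x is a monic commutator in the pure braid group P_n and S ⊆ N = {1,…,n}, then φ_S(x) = 1 if and only if σ(x) ∩ S ≠ ∅. -/
namespace BraidAux

variable {n : ℕ}

lemma mk_pf {a b : Fin n} (h : a < b) :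
    PresentedGroup.mk (braidRels n) (pf a b h) = p a b h := rfl

lemma mk_rel_eq_one {r : FreeGroup {q : Fin n × Fin n // q.1 < q.2}} (hr : r ∈ braidRels n) :
    PresentedGroup.mk (braidRels n) r = 1 :=
  (QuotientGroup.eq_one_iff _).mpr (Subgroup.subset_normalClosure hr)

lemma relA1 {a b c : Fin n} (hab : a < b) (hbc : b < c) :
    p a b hab * p a c (hab.trans hbc) * p b c hbc
      = p a c (hab.trans hbc) * p b c hbc * p a b hab := by
  have h := mk_rel_eq_one (n := n)
    (Or.inl (Or.inl (Or.inl (Or.inl ⟨a, b, c, hab, hbc, rfl⟩))))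
  rw [map_mul, map_inv, inv_mul_eq_one] at h
  simpa only [map_mul, mk_pf] using h

lemma relA2 {a b c : Fin n} (hab : a < b) (hbc : b < c) :
    p a b hab * p a c (hab.trans hbc) * p b c hbc
      = p b c hbc * p a b hab * p a c (hab.trans hbc) := by
  have h := mk_rel_eq_one (n := n)
    (Or.inl (Or.inl (Or.inl (Or.inr ⟨a, b, c, hab, hbc, rfl⟩))))
  rw [map_mul, map_inv, inv_mul_eq_one] at h
  simpa only [map_mul, mk_pf] using h

lemma relB1 {a b c d : Fin n} (hab : a < b) (hbc : b < c) (hcd : c < d) :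
    p a b hab * p c d hcd = p c d hcd * p a b hab := by
  have h := mk_rel_eq_one (n := n)
    (Or.inl (Or.inl (Or.inr ⟨a, b, c, d, hab, hbc, hcd, rfl⟩)))
  rw [map_mul, map_inv, inv_mul_eq_one] at h
  simpa only [map_mul, mk_pf] using h

lemma relB2 {a b c d : Fin n} (hab : a < b) (hbc : b < c) (hcd : c < d) :
    p a d (hab.trans (hbc.trans hcd)) * p b c hbc
      = p b c hbc * p a d (hab.trans (hbc.trans hcd)) := by
  have h := mk_rel_eq_one (n := n)
    (Or.inl (Or.inr ⟨a, b, c, d, hab, hbc, hcd, rfl⟩))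
  rw [map_mul, map_inv, inv_mul_eq_one] at h
  simpa only [map_mul, mk_pf] using h

lemma relC {a b c d : Fin n} (hab : a < b) (hbc : b < c) (hcd : c < d) :
    p a c (hab.trans hbc) * ((p b c hbc)⁻¹ * p b d (hbc.trans hcd) * p b c hbc)
      = (p b c hbc)⁻¹ * p b d (hbc.trans hcd) * p b c hbc * p a c (hab.trans hbc) := by
  have h := mk_rel_eq_one (n := n)
    (Or.inr ⟨a, b, c, d, hab, hbc, hcd, rfl⟩)
  rw [map_mul, map_inv, inv_mul_eq_one] at h
  simpa only [map_mul, map_inv, mk_pf] using h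



open Classical in
noncomputable def phiF (S : Set (Fin n)) : {q : Fin n × Fin n // q.1 < q.2} → PB n :=
  fun g => if g.1.1 ∈ S ∨ g.1.2 ∈ S then 1 else p g.1.1 g.1.2 g.2

lemma phi_exists (S : Set (Fin n)) : ∃ φ : PB n →* PB n, IsPhi S φ := by
  classical
  have hrels : ∀ r ∈ braidRels n, FreeGroup.lift (phiF S) r = 1 := by
    rintro r ((((⟨a, b, c, hab, hbc, rfl⟩ | ⟨a, b, c, hab, hbc, rfl⟩) |
        ⟨a, b, c, d, hab, hbc, hcd, rfl⟩) | ⟨a, b, c, d, hab, hbc, hcd, rfl⟩) |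
        ⟨a, b, c, d, hab, hbc, hcd, rfl⟩)
    · simp only [map_mul, map_inv, pf, FreeGroup.lift_apply_of, phiF]
      rw [inv_mul_eq_one]
      by_cases ha : a ∈ S <;> by_cases hb : b ∈ S <;> by_cases hc : c ∈ S <;>
        simp [ha, hb, hc, relA1 hab hbc]
    · simp only [map_mul, map_inv, pf, FreeGroup.lift_apply_of, phiF]
      rw [inv_mul_eq_one]
      by_cases ha : a ∈ S <;> by_cases hb : b ∈ S <;> by_cases hc : c ∈ S <;>
        simp [ha, hb, hc, relA2 hab hbc]
    · simp only [map_mul, map_inv, pf, FreeGroup.lift_apply_of, phiF]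
      rw [inv_mul_eq_one]
      by_cases ha : a ∈ S <;> by_cases hb : b ∈ S <;> by_cases hc : c ∈ S <;>
        by_cases hd : d ∈ S <;> simp [ha, hb, hc, hd, relB1 hab hbc hcd]
    · simp only [map_mul, map_inv, pf, FreeGroup.lift_apply_of, phiF]
      rw [inv_mul_eq_one]
      by_cases ha : a ∈ S <;> by_cases hb : b ∈ S <;> by_cases hc : c ∈ S <;>
        by_cases hd : d ∈ S <;> simp [ha, hb, hc, hd, relB2 hab hbc hcd]
    · simp only [map_mul, map_inv, pf, FreeGroup.lift_apply_of, phiF]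
      rw [inv_mul_eq_one]
      by_cases ha : a ∈ S <;> by_cases hb : b ∈ S <;> by_cases hc : c ∈ S <;>
        by_cases hd : d ∈ S <;> simp [ha, hb, hc, hd, relC hab hbc hcd]
  refine ⟨PresentedGroup.toGroup hrels, ?_⟩
  intro a b h
  constructor
  · rintro ⟨ha, hb⟩
    show PresentedGroup.toGroup hrels (PresentedGroup.of _) = _
    simp [PresentedGroup.toGroup.of, phiF, ha, hb, p]
  · intro hmem
    show PresentedGroup.toGroup hrels (PresentedGroup.of _) = _
    simp [PresentedGroup.toGroup.of, phiF, hmem]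

lemma p_ne_one {a b : Fin n} (h : a < b) : p a b h ≠ 1 := by
  have hrels : ∀ r ∈ braidRels n,
      FreeGroup.lift (fun _ : {q : Fin n × Fin n // q.1 < q.2} =>
        Multiplicative.ofAdd (1 : ℤ)) r = 1 := by
    rintro r ((((⟨a, b, c, hab, hbc, rfl⟩ | ⟨a, b, c, hab, hbc, rfl⟩) |
        ⟨a, b, c, d, hab, hbc, hcd, rfl⟩) | ⟨a, b, c, d, hab, hbc, hcd, rfl⟩) |
        ⟨a, b, c, d, hab, hbc, hcd, rfl⟩) <;>
      simp only [map_mul, map_inv, pf, FreeGroup.lift_apply_of] <;> group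
  intro hone
  have := congrArg (PresentedGroup.toGroup hrels) hone
  have h2 : (Multiplicative.ofAdd (1 : ℤ)) = 1 := by
    simpa [p, PresentedGroup.toGroup.of, map_one] using this
  simpa using h2



lemma PS_mono {S T : Set (Fin n)} (hST : S ⊆ T) : PS S ≤ PS T := by
  apply Subgroup.closure_mono
  rintro x ⟨a, b, h, haS, hbS, rfl⟩
  exact ⟨a, b, h, hST haS, hST hbS, rfl⟩

lemma phi_fix {S T : Set (Fin n)} {φ : PB n →* PB n} (hφ : IsPhi S φ) (hTS : T ∩ S = ∅)
    {x : PB n} (hx : x ∈ PS T) : φ x = x := by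
  have hdis : ∀ a ∈ T, a ∉ S := fun a haT haS =>
    Set.eq_empty_iff_forall_notMem.mp hTS a ⟨haT, haS⟩
  induction hx using Subgroup.closure_induction with
  | mem x hx =>
      obtain ⟨a, b, h, haT, hbT, rfl⟩ := hx
      exact (hφ a b h).1 ⟨hdis a haT, hdis b hbT⟩
  | one => exact map_one φ
  | mul x y _ _ hx hy => rw [map_mul, hx, hy]
  | inv x _ hx => rw [map_inv, hx]

lemma mem_support_iff {x : PB n} {a : Fin n} :
    a ∈ support x ↔ ∀ T : Set (Fin n), x ∈ PS T → a ∈ T := by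
  simp [support, Set.mem_sInter]

lemma support_subset {x : PB n} {T : Set (Fin n)} (hT : x ∈ PS T) : support x ⊆ T :=
  fun _ ha => mem_support_iff.mp ha T hT

lemma support_inv (x : PB n) : support x⁻¹ = support x := by
  have h : {S : Set (Fin n) | x⁻¹ ∈ PS S} = {S | x ∈ PS S} := by
    ext T
    exact Subgroup.inv_mem_iff (PS T)
  unfold support
  rw [h]

lemma singleton_disj {s : Fin n} {T : Set (Fin n)} (hsT : s ∉ T) : T ∩ {s} = ∅ := by
  ext t
  simp only [Set.mem_inter_iff, Set.mem_singleton_iff, Set.mem_empty_iff_false, iff_false,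
    not_and]
  rintro htT rfl
  exact hsT htT

lemma support_p {a b : Fin n} (h : a < b) : support (p a b h) = {a, b} := by
  have hmem : p a b h ∈ PS {a, b} :=
    Subgroup.subset_closure ⟨a, b, h, by simp, by simp, rfl⟩
  apply Set.Subset.antisymm (support_subset hmem)
  have key : ∀ s : Fin n, (s = a ∨ s = b) → s ∈ support (p a b h) := by
    intro s hs
    rw [mem_support_iff]
    intro T hT
    by_contra hsT
    obtain ⟨φ, hφ⟩ := phi_exists {s}
    have h1 : φ (p a b h) = p a b h := phi_fix hφ (singleton_disj hsT) hT
    have h2 : φ (p a b h) = 1 := by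
      apply (hφ a b h).2
      rcases hs with rfl | rfl
      · exact Or.inl rfl
      · exact Or.inr rfl
    exact p_ne_one h (h1.symm.trans h2)
  rintro s (rfl | rfl)
  · exact key s (Or.inl rfl)
  · exact key s (Or.inr rfl)

lemma main {x : PB n} (hx : IsMonic x) :
    x ≠ 1 ∧ x ∈ PS (support x) ∧ ∀ (S : Set (Fin n)) (φ : PB n →* PB n), IsPhi S φ →
      ((support x ∩ S).Nonempty → φ x = 1) ∧ (support x ∩ S = ∅ → φ x = x) := by
  induction hx with
  | of a b h =>
      refine ⟨p_ne_one h, ?_, ?_⟩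
      · rw [support_p]
        exact Subgroup.subset_closure ⟨a, b, h, by simp, by simp, rfl⟩
      · intro S φ hφ
        rw [support_p]
        constructor
        · rintro ⟨s, hs, hsS⟩
          apply (hφ a b h).2
          rcases hs with rfl | rfl
          · exact Or.inl hsS
          · exact Or.inr hsS
        · intro hemp
          apply (hφ a b h).1
          have := Set.eq_empty_iff_forall_notMem.mp hemp
          exact ⟨fun ha => this a ⟨Or.inl rfl, ha⟩, fun hb => this b ⟨Or.inr rfl, hb⟩⟩
  | inv a b h =>
      refine ⟨inv_ne_one.mpr (p_ne_one h), ?_, ?_⟩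
      · rw [support_inv, support_p]
        exact inv_mem (Subgroup.subset_closure ⟨a, b, h, by simp, by simp, rfl⟩)
      · intro S φ hφ
        rw [support_inv, support_p]
        constructor
        · rintro ⟨s, hs, hsS⟩
          have h2 : φ (p a b h) = 1 := by
            apply (hφ a b h).2
            rcases hs with rfl | rfl
            · exact Or.inl hsS
            · exact Or.inr hsS
          rw [map_inv, h2, inv_one]
        · intro hemp
          have h2 : φ (p a b h) = p a b h := by
            apply (hφ a b h).1
            have := Set.eq_empty_iff_forall_notMem.mp hemp
            exact ⟨fun ha => this a ⟨Or.inl rfl, ha⟩, fun hb => this b ⟨Or.inr rfl, hb⟩⟩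
          rw [map_inv, h2]
  | comm x y hxm hym hne ihx ihy =>
      obtain ⟨hx1, hxP, ihx⟩ := ihx
      obtain ⟨hy1, hyP, ihy⟩ := ihy
      have hcP : x⁻¹ * y⁻¹ * x * y ∈ PS (support x ∪ support y) := by
        have hx' : x ∈ PS (support x ∪ support y) := PS_mono Set.subset_union_left hxP
        have hy' : y ∈ PS (support x ∪ support y) := PS_mono Set.subset_union_right hyP
        exact mul_mem (mul_mem (mul_mem (inv_mem hx') (inv_mem hy')) hx') hy'
      have hkill : ∀ (S : Set (Fin n)) (φ : PB n →* PB n), IsPhi S φ →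
          (φ x = 1 ∨ φ y = 1) → φ (x⁻¹ * y⁻¹ * x * y) = 1 := by
        rintro S φ hφ (h1 | h1) <;>
          simp [map_mul, map_inv, h1, mul_assoc]
      have hsupp : support (x⁻¹ * y⁻¹ * x * y) = support x ∪ support y := by
        apply Set.Subset.antisymm (support_subset hcP)
        intro s hs
        rw [mem_support_iff]
        intro T hT
        by_contra hsT
        obtain ⟨φ, hφ⟩ := phi_exists {s}
        have hfix : φ (x⁻¹ * y⁻¹ * x * y) = x⁻¹ * y⁻¹ * x * y :=
          phi_fix hφ (singleton_disj hsT) hT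
        have hone : φ (x⁻¹ * y⁻¹ * x * y) = 1 := by
          apply hkill _ _ hφ
          rcases hs with hsx | hsy
          · exact Or.inl ((ihx _ φ hφ).1 ⟨s, hsx, rfl⟩)
          · exact Or.inr ((ihy _ φ hφ).1 ⟨s, hsy, rfl⟩)
        exact hne (hfix.symm.trans hone)
      refine ⟨hne, ?_, ?_⟩
      · rw [hsupp]; exact hcP
      · intro S φ hφ
        rw [hsupp]
        constructor
        · rintro ⟨s, hs, hsS⟩
          apply hkill _ _ hφ
          rcases hs with hsx | hsy
          · exact Or.inl ((ihx _ φ hφ).1 ⟨s, hsx, hsS⟩)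
          · exact Or.inr ((ihy _ φ hφ).1 ⟨s, hsy, hsS⟩)
        · intro hemp
          rw [Set.union_inter_distrib_right, Set.union_empty_iff] at hemp
          have h1 := (ihx _ φ hφ).2 hemp.1
          have h2 := (ihy _ φ hφ).2 hemp.2
          simp [map_mul, map_inv, h1, h2]

end BraidAux

/-- for a monic commutator `x` and `S ⊆ N`,
`φ_S(x) = 1` if and only if `σ(x) ∩ S ≠ ∅`. -/
theorem phi_eq_one_iff (n : ℕ) (hn : 0 < n) (S : Set (Fin n))
    (φ : PB n →* PB n) (hφ : IsPhi S φ) (x : PB n) (hx : IsMonic x) :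
    φ x = 1 ↔ support x ∩ S ≠ ∅ := by
  obtain ⟨hne, -, hmain⟩ := BraidAux.main hx
  obtain ⟨h1, h2⟩ := hmain S φ hφ
  constructor
  · intro h hemp
    exact hne ((h2 hemp).symm.trans h)
  · intro hne'
    exact h1 (Set.nonempty_iff_ne_empty.mpr hne')
end

section
/- The subgroup of Brunnian braids in the pure braid group P_n (those q ∈ P_n with φ_{{i}}(q) = 1 for every i ∈ N) is generated by the set of monic commutators x whose support σ(x) equals all of N = {1,…,n}. -/
namespace BrunnianAux

variable {n : ℕ}

/-! ### Relations hold in `PB n` -/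

lemma mk_rel {r : FreeGroup {q : Fin n × Fin n // q.1 < q.2}} (hr : r ∈ braidRels n) :
    PresentedGroup.mk (braidRels n) r = 1 :=
  (QuotientGroup.eq_one_iff r).mpr (Subgroup.subset_normalClosure hr)

lemma mk_pf (a b : Fin n) (h : a < b) :
    PresentedGroup.mk (braidRels n) (pf a b h) = p a b h := rfl

lemma relA1 (a b c : Fin n) (hab : a < b) (hbc : b < c) :
    (p a b hab * p a c (hab.trans hbc) * p b c hbc)⁻¹ *
      (p a c (hab.trans hbc) * p b c hbc * p a b hab) = 1 := by
  have h := mk_rel (n := n) (Or.inl (Or.inl (Or.inl (Or.inl ⟨a, b, c, hab, hbc, rfl⟩))))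
  simpa only [map_mul, map_inv, mk_pf] using h

lemma relA2 (a b c : Fin n) (hab : a < b) (hbc : b < c) :
    (p a b hab * p a c (hab.trans hbc) * p b c hbc)⁻¹ *
      (p b c hbc * p a b hab * p a c (hab.trans hbc)) = 1 := by
  have h := mk_rel (n := n) (Or.inl (Or.inl (Or.inl (Or.inr ⟨a, b, c, hab, hbc, rfl⟩))))
  simpa only [map_mul, map_inv, mk_pf] using h

lemma relB1 (a b c d : Fin n) (hab : a < b) (hbc : b < c) (hcd : c < d) :
    (p a b hab * p c d hcd)⁻¹ * (p c d hcd * p a b hab) = 1 := by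
  have h := mk_rel (n := n) (Or.inl (Or.inl (Or.inr ⟨a, b, c, d, hab, hbc, hcd, rfl⟩)))
  simpa only [map_mul, map_inv, mk_pf] using h

lemma relB2 (a b c d : Fin n) (hab : a < b) (hbc : b < c) (hcd : c < d) :
    (p a d (hab.trans (hbc.trans hcd)) * p b c hbc)⁻¹ *
      (p b c hbc * p a d (hab.trans (hbc.trans hcd))) = 1 := by
  have h := mk_rel (n := n) (Or.inl (Or.inr ⟨a, b, c, d, hab, hbc, hcd, rfl⟩))
  simpa only [map_mul, map_inv, mk_pf] using h

lemma relC (a b c d : Fin n) (hab : a < b) (hbc : b < c) (hcd : c < d) :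
    (p a c (hab.trans hbc) * ((p b c hbc)⁻¹ * p b d (hbc.trans hcd) * p b c hbc))⁻¹ *
      ((p b c hbc)⁻¹ * p b d (hbc.trans hcd) * p b c hbc * p a c (hab.trans hbc)) = 1 := by
  have h := mk_rel (n := n) (Or.inr ⟨a, b, c, d, hab, hbc, hcd, rfl⟩)
  simpa only [map_mul, map_inv, mk_pf] using h


/-! ### Construction of the homomorphisms `φ_i` -/

def phiF (i : Fin n) (x : {q : Fin n × Fin n // q.1 < q.2}) : PB n :=
  if x.1.1 = i ∨ x.1.2 = i then 1 else PresentedGroup.of x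

lemma phiF_rels (i : Fin n) : ∀ r ∈ braidRels n, FreeGroup.lift (phiF i) r = 1 := by
  have key : ∀ (a b : Fin n) (h : a < b),
      FreeGroup.lift (phiF i) (pf a b h) = if a = i ∨ b = i then (1 : PB n) else p a b h := by
    intro a b h
    rw [pf, FreeGroup.lift_apply_of]
    rfl
  intro r hr
  simp only [braidRels, Set.mem_union, Set.mem_setOf_eq] at hr
  obtain (((⟨a,b,c,hab,hbc,rfl⟩ | ⟨a,b,c,hab,hbc,rfl⟩) | ⟨a,b,c,d,hab,hbc,hcd,rfl⟩) |
      ⟨a,b,c,d,hab,hbc,hcd,rfl⟩) | ⟨a,b,c,d,hab,hbc,hcd,rfl⟩ := hr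
  · simp only [map_mul, map_inv, key]
    split_ifs <;> first
      | exact relA1 a b c hab hbc
      | (exfalso; tauto)
      | (group)
      | group
  · simp only [map_mul, map_inv, key]
    split_ifs <;> first
      | exact relA2 a b c hab hbc
      | (exfalso; tauto)
      | (group)
      | group
  · simp only [map_mul, map_inv, key]
    split_ifs <;> first
      | exact relB1 a b c d hab hbc hcd
      | (exfalso; tauto)
      | (group)
      | group
  · simp only [map_mul, map_inv, key]
    split_ifs <;> first
      | exact relB2 a b c d hab hbc hcd
      | (exfalso; tauto)
      | (group)
      | group
  · simp only [map_mul, map_inv, key]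
    split_ifs <;> first
      | exact relC a b c d hab hbc hcd
      | (exfalso; tauto)
      | (group)
      | group

def phi (i : Fin n) : PB n →* PB n := PresentedGroup.toGroup (phiF_rels i)

lemma phi_p (i a b : Fin n) (h : a < b) :
    phi i (p a b h) = if a = i ∨ b = i then 1 else p a b h :=
  PresentedGroup.toGroup.of (phiF_rels i)

lemma isPhi_phi (i : Fin n) : IsPhi {i} (phi i) := by
  intro a b h
  constructor
  · rintro ⟨ha, hb⟩
    simp only [Set.mem_singleton_iff] at ha hb
    rw [phi_p, if_neg (by tauto)]
  · intro hab
    simp only [Set.mem_singleton_iff] at hab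
    rw [phi_p, if_pos hab]

/-! ### Nontriviality via total exponent sum -/

def expSum : PB n →* Multiplicative ℤ :=
  PresentedGroup.toGroup (f := fun _ => Multiplicative.ofAdd (1 : ℤ)) (by
    intro r hr
    simp only [braidRels, Set.mem_union, Set.mem_setOf_eq] at hr
    obtain (((⟨a,b,c,hab,hbc,rfl⟩ | ⟨a,b,c,hab,hbc,rfl⟩) | ⟨a,b,c,d,hab,hbc,hcd,rfl⟩) |
        ⟨a,b,c,d,hab,hbc,hcd,rfl⟩) | ⟨a,b,c,d,hab,hbc,hcd,rfl⟩ := hr <;>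
      simp only [map_mul, map_inv, pf, FreeGroup.lift_apply_of] <;> group)

lemma p_ne_one (a b : Fin n) (h : a < b) : p a b h ≠ 1 := by
  intro hc
  have h1 : expSum (p a b h) = Multiplicative.ofAdd (1 : ℤ) :=
    PresentedGroup.toGroup.of _
  rw [hc, map_one] at h1
  exact absurd h1.symm (by simp)

lemma monic_ne_one {x : PB n} (hx : IsMonic x) : x ≠ 1 := by
  induction hx with
  | of a b h => exact p_ne_one a b h
  | inv a b h => simpa using p_ne_one a b h
  | comm x y hx hy hne => exact hne

/-! ### Basic properties of monic commutators -/

lemma monic_inv {x : PB n} (hx : IsMonic x) : IsMonic x⁻¹ := by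
  induction hx with
  | of a b h => exact IsMonic.inv a b h
  | inv a b h => rw [inv_inv]; exact IsMonic.of a b h
  | comm x y hx hy hne =>
    have e : (x⁻¹ * y⁻¹ * x * y)⁻¹ = y⁻¹ * x⁻¹ * y * x := by group
    rw [e]
    refine IsMonic.comm y x hy hx ?_
    have e2 : y⁻¹ * x⁻¹ * y * x = (x⁻¹ * y⁻¹ * x * y)⁻¹ := by group
    rw [e2, ne_eq, inv_eq_one]
    exact hne

lemma monic_phi {x : PB n} (hx : IsMonic x) (i : Fin n) : phi i x = x ∨ phi i x = 1 := by
  induction hx with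
  | of a b h => rw [phi_p]; split_ifs; exacts [Or.inr rfl, Or.inl rfl]
  | inv a b h => rw [map_inv, phi_p]; split_ifs <;> simp
  | comm x y hx hy hne ihx ihy =>
    simp only [map_mul, map_inv]
    rcases ihx with h1 | h1 <;> rcases ihy with h2 | h2 <;> rw [h1, h2]
    · exact Or.inl rfl
    · refine Or.inr ?_; group
    · refine Or.inr ?_; group
    · refine Or.inr ?_; group

lemma closure_monic : Subgroup.closure {x : PB n | IsMonic x} = ⊤ := by
  rw [eq_top_iff, ← PresentedGroup.closure_range_of (braidRels n)]
  apply Subgroup.closure_mono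
  rintro x ⟨⟨⟨a, b⟩, h⟩, rfl⟩
  exact IsMonic.of a b h

/-! ### Normality -/

lemma normal_of_monic_conj (M : Set (PB n))
    (hM : ∀ g x, IsMonic g → x ∈ M →
      g * x * g⁻¹ ∈ Subgroup.closure M ∧ g⁻¹ * x * g ∈ Subgroup.closure M) :
    (Subgroup.closure M).Normal := by
  rw [← Subgroup.normalizer_eq_top_iff, eq_top_iff, ← closure_monic, Subgroup.closure_le]
  intro g hg
  have conj1 : ∀ h ∈ Subgroup.closure M, g * h * g⁻¹ ∈ Subgroup.closure M := by
    intro h hh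
    refine Subgroup.closure_induction (p := fun x _ => g * x * g⁻¹ ∈ Subgroup.closure M)
      (fun x hx => (hM g x hg hx).1) ?_ ?_ ?_ hh
    · show g * 1 * g⁻¹ ∈ Subgroup.closure M
      have e : g * 1 * g⁻¹ = (1 : PB n) := by group
      rw [e]; exact one_mem _
    · intro x y hx hy ihx ihy
      show g * (x * y) * g⁻¹ ∈ Subgroup.closure M
      have e : g * (x * y) * g⁻¹ = (g * x * g⁻¹) * (g * y * g⁻¹) := by group
      rw [e]; exact mul_mem ihx ihy
    · intro x hx ihx
      show g * x⁻¹ * g⁻¹ ∈ Subgroup.closure M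
      have e : g * x⁻¹ * g⁻¹ = (g * x * g⁻¹)⁻¹ := by group
      rw [e]; exact inv_mem ihx
  have conj2 : ∀ h ∈ Subgroup.closure M, g⁻¹ * h * g ∈ Subgroup.closure M := by
    intro h hh
    refine Subgroup.closure_induction (p := fun x _ => g⁻¹ * x * g ∈ Subgroup.closure M)
      (fun x hx => (hM g x hg hx).2) ?_ ?_ ?_ hh
    · show g⁻¹ * 1 * g ∈ Subgroup.closure M
      have e : g⁻¹ * 1 * g = (1 : PB n) := by group
      rw [e]; exact one_mem _
    · intro x y hx hy ihx ihy
      show g⁻¹ * (x * y) * g ∈ Subgroup.closure M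
      have e : g⁻¹ * (x * y) * g = (g⁻¹ * x * g) * (g⁻¹ * y * g) := by group
      rw [e]; exact mul_mem ihx ihy
    · intro x hx ihx
      show g⁻¹ * x⁻¹ * g ∈ Subgroup.closure M
      have e : g⁻¹ * x⁻¹ * g = (g⁻¹ * x * g)⁻¹ := by group
      rw [e]; exact inv_mem ihx
  rw [SetLike.mem_coe, Subgroup.mem_normalizer_iff]
  intro h
  constructor
  · exact fun hh => conj1 h hh
  · intro hh
    have h2 := conj2 _ hh
    have e : g⁻¹ * (g * h * g⁻¹) * g = h := by group
    rwa [e] at h2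

/-! ### The collection lemma -/

lemma collect (T : Finset (Fin n)) :
    ∀ q : PB n, (∀ i ∈ T, phi i q = 1) →
      q ∈ Subgroup.closure {x : PB n | IsMonic x ∧ ∀ i ∈ T, phi i x = 1} := by
  classical
  induction T using Finset.induction_on with
  | empty =>
    intro q _
    have e : {x : PB n | IsMonic x ∧ ∀ i ∈ (∅ : Finset (Fin n)), phi i x = 1} =
        {x : PB n | IsMonic x} := by ext x; simp
    rw [e, closure_monic]
    exact Subgroup.mem_top q
  | @insert j T' hj ih =>
    intro q hq
    set M : Set (PB n) := {x | IsMonic x ∧ ∀ i ∈ insert j T', phi i x = 1} with hMdef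
    have key : ∀ g x : PB n, IsMonic g → x ∈ M → g * x * g⁻¹ ∈ Subgroup.closure M := by
      intro g x hg hx
      obtain ⟨hx1, hx2⟩ := hx
      set c := x⁻¹ * (g⁻¹)⁻¹ * x * g⁻¹ with hc
      have e : g * x * g⁻¹ = x * c := by rw [hc]; group
      rw [e]
      by_cases h1 : c = 1
      · rw [h1, mul_one]; exact Subgroup.subset_closure ⟨hx1, hx2⟩
      · refine mul_mem (Subgroup.subset_closure ⟨hx1, hx2⟩) (Subgroup.subset_closure ?_)
        refine ⟨IsMonic.comm x g⁻¹ hx1 (monic_inv hg) h1, ?_⟩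
        intro i hi
        rw [hc]
        simp only [map_mul, map_inv, hx2 i hi]
        group
    have hnormal : (Subgroup.closure M).Normal := by
      apply normal_of_monic_conj
      intro g x hg hx
      refine ⟨key g x hg hx, ?_⟩
      have h2 := key g⁻¹ x (monic_inv hg) hx
      rwa [inv_inv] at h2
    have hq' : q ∈ Subgroup.closure {x : PB n | IsMonic x ∧ ∀ i ∈ T', phi i x = 1} :=
      ih q (fun i hi => hq i (Finset.mem_insert_of_mem hi))
    have main : q * (phi j q)⁻¹ ∈ Subgroup.closure M := by
      refine Subgroup.closure_induction (p := fun x _ => x * (phi j x)⁻¹ ∈ Subgroup.closure M)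
        ?_ ?_ ?_ ?_ hq'
      · intro x hx
        show x * (phi j x)⁻¹ ∈ Subgroup.closure M
        rcases monic_phi hx.1 j with h1 | h1
        · rw [h1, mul_inv_cancel]; exact one_mem _
        · rw [h1, inv_one, mul_one]
          refine Subgroup.subset_closure ⟨hx.1, ?_⟩
          intro i hi
          rcases Finset.mem_insert.mp hi with rfl | hi'
          · exact h1
          · exact hx.2 i hi'
      · simpa using one_mem (Subgroup.closure M)
      · intro x y hx hy ihx ihy
        show (x * y) * (phi j (x * y))⁻¹ ∈ Subgroup.closure M
        have e : (x * y) * (phi j (x * y))⁻¹ =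
            x * (y * (phi j y)⁻¹) * x⁻¹ * (x * (phi j x)⁻¹) := by
          rw [map_mul]; group
        rw [e]
        exact mul_mem (hnormal.conj_mem _ ihy x) ihx
      · intro x hx ihx
        show x⁻¹ * (phi j x⁻¹)⁻¹ ∈ Subgroup.closure M
        have e : x⁻¹ * (phi j x⁻¹)⁻¹ = x⁻¹ * (x * (phi j x)⁻¹)⁻¹ * x⁻¹⁻¹ := by
          rw [map_inv]; group
        rw [e]
        exact hnormal.conj_mem _ (inv_mem ihx) x⁻¹
    have hjq : phi j q = 1 := hq j (Finset.mem_insert_self j T')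
    rwa [hjq, inv_one, mul_one] at main

/-! ### Support facts -/

lemma phi_fix {S : Set (Fin n)} {i : Fin n} (hi : i ∉ S) :
    ∀ x ∈ PS S, phi i x = x := by
  intro x hx
  refine Subgroup.closure_induction (p := fun x _ => phi i x = x) ?_ (map_one _) ?_ ?_ hx
  · rintro x ⟨a, b, h, ha, hb, rfl⟩
    show phi i (p a b h) = p a b h
    rw [phi_p, if_neg]
    rintro (rfl | rfl)
    exacts [hi ha, hi hb]
  · intro x y _ _ ihx ihy
    show phi i (x * y) = x * y
    rw [map_mul, ihx, ihy]
  · intro x _ ihx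
    show phi i x⁻¹ = x⁻¹
    rw [map_inv, ihx]

lemma forward_dichot {i : Fin n} {φ : PB n →* PB n} (hφ : IsPhi {i} φ) {x : PB n}
    (hm : IsMonic x) : φ x = 1 ∨ (φ x = x ∧ x ∈ PS ({i}ᶜ : Set (Fin n))) := by
  induction hm with
  | of a b h =>
    by_cases hc : a = i ∨ b = i
    · exact Or.inl ((hφ a b h).2 (by simpa using hc))
    · push_neg at hc
      refine Or.inr ⟨(hφ a b h).1 ⟨by simp [hc.1], by simp [hc.2]⟩, ?_⟩
      exact Subgroup.subset_closure ⟨a, b, h, by simp [hc.1], by simp [hc.2], rfl⟩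
  | inv a b h =>
    by_cases hc : a = i ∨ b = i
    · left; rw [map_inv, (hφ a b h).2 (by simpa using hc), inv_one]
    · push_neg at hc
      refine Or.inr ⟨?_, ?_⟩
      · rw [map_inv, (hφ a b h).1 ⟨by simp [hc.1], by simp [hc.2]⟩]
      · exact inv_mem (Subgroup.subset_closure ⟨a, b, h, by simp [hc.1], by simp [hc.2], rfl⟩)
  | comm x y hx hy hne ihx ihy =>
    rcases ihx with h1 | ⟨h1, h1'⟩
    · left; simp only [map_mul, map_inv, h1]; group
    · rcases ihy with h2 | ⟨h2, h2'⟩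
      · left; simp only [map_mul, map_inv, h2]; group
      · refine Or.inr ⟨by simp only [map_mul, map_inv, h1, h2], ?_⟩
        exact mul_mem (mul_mem (mul_mem (inv_mem h1') (inv_mem h2')) h1') h2'

end BrunnianAux
/-- Corollary 2.3: the subgroup of Brunnian braids in `P_n` is
generated by the monic commutators whose support is all of `N = {1,…,n}`. -/
theorem brunnian (n : ℕ) (hn : 0 < n) (q : PB n) :
    q ∈ Subgroup.closure
        {x : PB n | IsMonic x ∧ support x = (Set.univ : Set (Fin n))} ↔
      ∀ (i : Fin n) (φ : PB n →* PB n), IsPhi {i} φ → φ q = 1 := by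
  constructor
  · intro hq i φ hφ
    refine Subgroup.closure_induction (p := fun x _ => φ x = 1) ?_ (map_one φ) ?_ ?_ hq
    · intro x hx
      obtain ⟨hm, hs⟩ := hx
      rcases BrunnianAux.forward_dichot hφ hm with h1 | ⟨h1, h2⟩
      · exact h1
      · exfalso
        have hsub : support x ⊆ ({i}ᶜ : Set (Fin n)) :=
          Set.sInter_subset_of_mem (show ({i}ᶜ : Set (Fin n)) ∈ {S | x ∈ PS S} from h2)
        rw [hs] at hsub
        exact (hsub (Set.mem_univ i)) rfl
    · intro x y _ _ ihx ihy
      show φ (x * y) = 1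
      rw [map_mul, ihx, ihy, one_mul]
    · intro x _ ihx
      show φ x⁻¹ = 1
      rw [map_inv, ihx, inv_one]
  · intro hq
    have h1 := BrunnianAux.collect Finset.univ q
      (fun i _ => hq i (BrunnianAux.phi i) (BrunnianAux.isPhi_phi i))
    refine Subgroup.closure_mono ?_ h1
    rintro x ⟨hm, hkill⟩
    refine ⟨hm, ?_⟩
    rw [Set.eq_univ_iff_forall]
    intro i
    simp only [support, Set.mem_sInter, Set.mem_setOf_eq]
    intro S hS
    by_contra hiS
    have hfix : BrunnianAux.phi i x = x := BrunnianAux.phi_fix hiS x hS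
    have hone : BrunnianAux.phi i x = 1 := hkill i (Finset.mem_univ i)
    exact BrunnianAux.monic_ne_one hm (by rw [← hfix, hone])
end
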